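/- A rank-one Hankel operator on H² is a scalar multiple of the rank-one operator k_{ω̄} ⊗ k_ω for some ω ∈ 𝔻: if H_φ has rank one, then there exist ω ∈ 𝔻 and a constant c with H_φ = c (k_{ω̄} ⊗ k_ω), where k_ω(z) = 1/(1 − ω̄z). Consequently, if H_{φ̄}^* H_{φ̄} = H_{z̄}^* H_{z̄} for φ ∈ H², then φ = e^{iθ} z + β for some θ ∈ [0,2π) and β ∈ ℂ. -/

import Mathlib

open MeasureTheory Complex Real InnerProductSpace Submodule

set_option maxHeartbeats 1000000
set_option synthInstance.maxHeartbeats 200000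

noncomputable section

namespace BlockToeplitz

instance fact2pi : Fact (0 < 2 * π) := ⟨by positivity⟩

/-- The unit circle, as the additive circle `ℝ / 2πℤ`. -/
abbrev 𝕋 : Type := AddCircle (2 * π)

/-- Normalized Haar (Lebesgue) measure on the circle. -/
abbrev μ𝕋 : Measure 𝕋 := AddCircle.haarAddCircle

section Pointwise

variable {E F : Type*} [NormedAddCommGroup E] [NormedSpace ℂ E]
  [NormedAddCommGroup F] [NormedSpace ℂ F]

theorem memLp_pointwise {Φ : 𝕋 → (E →L[ℂ] F)} (hm : AEStronglyMeasurable Φ μ𝕋)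
    {C : ℝ} (hC : ∀ x, ‖Φ x‖ ≤ C) (f : Lp E 2 μ𝕋) :
    MemLp (fun x => Φ x (f x)) 2 μ𝕋 := by
  refine MemLp.of_le_mul (c := C) (Lp.memLp f) ?_ ?_
  · exact isBoundedBilinearMap_apply.continuous.comp_aestronglyMeasurable
      (hm.prodMk (Lp.aestronglyMeasurable f))
  · refine Filter.Eventually.of_forall fun x => ?_
    exact (ContinuousLinearMap.le_opNorm _ _).trans
      (mul_le_mul_of_nonneg_right (hC x) (norm_nonneg _))

/-- The operator on `L²` of pointwise application of a uniformly bounded family of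
operators (e.g. multiplication by an `L^∞` matrix function). -/
def pointwiseCLM (Φ : 𝕋 → (E →L[ℂ] F)) (hm : AEStronglyMeasurable Φ μ𝕋)
    {C : ℝ} (hC : ∀ x, ‖Φ x‖ ≤ C) : Lp E 2 μ𝕋 →L[ℂ] Lp F 2 μ𝕋 :=
  LinearMap.mkContinuous
    { toFun := fun f => (memLp_pointwise hm hC f).toLp _
      map_add' := fun f g => by
        rw [← MemLp.toLp_add (memLp_pointwise hm hC f) (memLp_pointwise hm hC g)]
        refine MemLp.toLp_congr _ _ ?_
        filter_upwards [Lp.coeFn_add f g] with x hx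
        simp only [hx, Pi.add_apply, map_add]
      map_smul' := fun c f => by
        try dsimp only
        rw [RingHom.id_apply, ← MemLp.toLp_const_smul c (memLp_pointwise hm hC f)]
        refine MemLp.toLp_congr _ _ ?_
        filter_upwards [Lp.coeFn_smul c f] with x hx
        simp only [hx, Pi.smul_apply, ContinuousLinearMap.map_smul] }
    (max C 0)
    (by
      intro f
      simp only [LinearMap.coe_mk, AddHom.coe_mk]
      rw [Lp.norm_toLp]
      have hb : eLpNorm (fun x => Φ x (f x)) 2 μ𝕋
          ≤ ENNReal.ofReal (max C 0) * eLpNorm (f : 𝕋 → E) 2 μ𝕋 := by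
        refine eLpNorm_le_mul_eLpNorm_of_ae_le_mul ?_ 2
        refine Filter.Eventually.of_forall fun x => ?_
        exact (ContinuousLinearMap.le_opNorm _ _).trans
          (mul_le_mul_of_nonneg_right ((hC x).trans (le_max_left _ _)) (norm_nonneg _))
      calc (eLpNorm (fun x => Φ x (f x)) 2 μ𝕋).toReal
          ≤ (ENNReal.ofReal (max C 0) * eLpNorm (f : 𝕋 → E) 2 μ𝕋).toReal := by
            refine ENNReal.toReal_mono ?_ hb
            exact ENNReal.mul_ne_top ENNReal.ofReal_ne_top (Lp.eLpNorm_ne_top f)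
        _ = max C 0 * ‖f‖ := by
            rw [ENNReal.toReal_mul, ENNReal.toReal_ofReal (le_max_right C 0), Lp.norm_def])

@[simp] theorem pointwiseCLM_apply (Φ : 𝕋 → (E →L[ℂ] F)) (hm : AEStronglyMeasurable Φ μ𝕋)
    {C : ℝ} (hC : ∀ x, ‖Φ x‖ ≤ C) (f : Lp E 2 μ𝕋) :
    pointwiseCLM Φ hm hC f = (memLp_pointwise hm hC f).toLp _ := rfl

end Pointwise

end BlockToeplitz

namespace BlockToeplitz
open scoped ComplexConjugate

variable {ι : Type} [Fintype ι]

/-- `ℂ^ι`. -/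
abbrev V (ι : Type) [Fintype ι] : Type := EuclideanSpace ℂ ι

/-- The space `L²(𝕋, ℂ^ι)`. -/
abbrev L2 (ι : Type) [Fintype ι] : Type := Lp (V ι) 2 μ𝕋

/-- The vector-valued trigonometric monomial `z^k ⊗ e_i` as an element of `L²`. -/
def fourierV (ι : Type) [Fintype ι] [DecidableEq ι] (k : ℤ) (i : ι) : L2 ι :=
  (ContinuousMap.toLp (E := V ι) 2 μ𝕋 ℂ)
    ⟨fun x => fourier k x • EuclideanSpace.single i 1,
      (map_continuous (fourier k)).smul continuous_const⟩

/-- The span of the analytic-negative monomials. -/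
def negSpan (ι : Type) [Fintype ι] : Submodule ℂ (L2 ι) :=
  Submodule.span ℂ
    {f | ∃ k : ℤ, k < 0 ∧ ∃ i : ι, f = @fourierV ι _ (Classical.decEq ι) k i}

/-- The vector-valued Hardy space `H²(𝕋, ℂ^ι)`, i.e. the orthogonal complement in
`L²` of the span of the monomials `z^k ⊗ e_i`, `k < 0`. -/
def hardy (ι : Type) [Fintype ι] : Submodule ℂ (L2 ι) := (negSpan ι)ᗮ

/-- The Hardy space as a Hilbert space. -/
abbrev H2 (ι : Type) [Fintype ι] : Type := ↥(hardy ι)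

instance : CompleteSpace (H2 ι) := by
  unfold H2 hardy; infer_instance

instance : HasOrthogonalProjection (hardy ι) := by
  unfold hardy; infer_instance

/-- The orthogonal projection `P` of `L²` onto `H²`. -/
def hardyProj (ι : Type) [Fintype ι] : L2 ι →L[ℂ] H2 ι :=
  orthogonalProjection (hardy ι)

/-- A matrix-valued `L^∞` function on the circle (the matrices being identified with the
operators on `ℂ^ι` that they induce): a bounded measurable family of operators. -/
structure Symbol (ι : Type) [Fintype ι] : Type where
  toFun : 𝕋 → (V ι →L[ℂ] V ι)
  meas : AEStronglyMeasurable toFun μ𝕋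
  bound : ℝ
  le_bound : ∀ x, ‖toFun x‖ ≤ bound

instance : CoeFun (Symbol ι) (fun _ => 𝕋 → (V ι →L[ℂ] V ι)) := ⟨Symbol.toFun⟩

/-- The multiplication operator `f ↦ Φ f` on `L²(𝕋, ℂ^ι)`. -/
def Symbol.mulLp (Φ : Symbol ι) : L2 ι →L[ℂ] L2 ι :=
  pointwiseCLM Φ.toFun Φ.meas Φ.le_bound

/-- Pointwise product (composition) of two matrix symbols. -/
def Symbol.mul (Φ Ψ : Symbol ι) : Symbol ι where
  toFun := fun x => (Φ x).comp (Ψ x)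
  meas := isBoundedBilinearMap_comp.continuous.comp_aestronglyMeasurable
    (Φ.meas.prodMk Ψ.meas)
  bound := max Φ.bound 0 * max Ψ.bound 0
  le_bound := fun x => (ContinuousLinearMap.opNorm_comp_le _ _).trans <|
    mul_le_mul ((Φ.le_bound x).trans (le_max_left _ _))
      ((Ψ.le_bound x).trans (le_max_left _ _)) (norm_nonneg _) (le_max_right _ _)

/-- The pointwise adjoint symbol `Φ*` (conjugate transpose). -/
def Symbol.star (Φ : Symbol ι) : Symbol ι where
  toFun := fun x => ContinuousLinearMap.adjoint (Φ x)
  meas := (ContinuousLinearMap.adjoint (𝕜 := ℂ) (E := V ι)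
      (F := V ι)).continuous.comp_aestronglyMeasurable Φ.meas
  bound := Φ.bound
  le_bound := fun x =>
    le_trans
      (le_of_eq ((ContinuousLinearMap.adjoint (𝕜 := ℂ) (E := V ι) (F := V ι)).norm_map (Φ.toFun x)))
      (Φ.le_bound x)

end BlockToeplitz

namespace BlockToeplitz
open scoped ComplexConjugate

theorem norm_fourier_apply (k : ℤ) (x : 𝕋) : ‖fourier k x‖ = 1 := by
  rw [fourier_apply]; exact Circle.norm_coe _

section CompNeg

variable {E : Type*} [NormedAddCommGroup E] [NormedSpace ℂ E]

/-- The composition operator `f(z) ↦ f(z̄)` (i.e. `x ↦ -x` on the additive circle)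
on `L²`. -/
def compNeg (E : Type*) [NormedAddCommGroup E] [NormedSpace ℂ E] :
    Lp E 2 μ𝕋 →L[ℂ] Lp E 2 μ𝕋 :=
  LinearMap.mkContinuous
    { toFun := fun f =>
        Lp.compMeasurePreserving (E := E) (p := 2) Neg.neg
          (Measure.measurePreserving_neg μ𝕋) f
      map_add' := fun f g => by
        exact map_add (Lp.compMeasurePreserving Neg.neg (Measure.measurePreserving_neg μ𝕋)) f g
      map_smul' := fun c f => by
        apply Lp.ext
        have h1 := Lp.coeFn_compMeasurePreserving (μ := μ𝕋) (c • f)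
          (Measure.measurePreserving_neg μ𝕋)
        have h2 := Lp.coeFn_compMeasurePreserving (μ := μ𝕋) f
          (Measure.measurePreserving_neg μ𝕋)
        have h3 : ((c • f : Lp E 2 μ𝕋) : 𝕋 → E) ∘ Neg.neg
            =ᵐ[μ𝕋] ((c • (f : 𝕋 → E)) ∘ Neg.neg) :=
          (Measure.measurePreserving_neg μ𝕋).quasiMeasurePreserving.ae_eq_comp
            (Lp.coeFn_smul c f)
        filter_upwards [h1, h3,
          Lp.coeFn_smul c (Lp.compMeasurePreserving (E := E) (p := 2) Neg.neg
            (Measure.measurePreserving_neg μ𝕋) f), h2]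
          with x hx1 hx3 hx4 hx2
        rw [RingHom.id_apply, hx1, hx3, hx4]
        show c • (f : 𝕋 → E) (-x)
            = c • (Lp.compMeasurePreserving (E := E) (p := 2) Neg.neg
                (Measure.measurePreserving_neg μ𝕋) f : 𝕋 → E) x
        rw [hx2]
        rfl }
    1
    (fun f => by
      simpa using (Lp.norm_compMeasurePreserving (E := E) (p := 2) f
        (Measure.measurePreserving_neg μ𝕋)).le)

/-- The unitary operator `J f (z) = z̄ f(z̄)` on `L²`. -/
def Jop (E : Type*) [NormedAddCommGroup E] [NormedSpace ℂ E] :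
    Lp E 2 μ𝕋 →L[ℂ] Lp E 2 μ𝕋 :=
  (pointwiseCLM (fun x => (fourier (-1) x : ℂ) • (1 : E →L[ℂ] E))
      (((map_continuous (fourier (-1))).smul continuous_const).aestronglyMeasurable)
      (C := 1)
      (fun x => by
        show ‖(fourier (-1)) x • (1 : E →L[ℂ] E)‖ ≤ 1
        rw [norm_smul ((fourier (-1)) x) (1 : E →L[ℂ] E), norm_fourier_apply, one_mul,
          ContinuousLinearMap.one_def]
        exact ContinuousLinearMap.norm_id_le)).comp (compNeg E)

end CompNeg

end BlockToeplitz

namespace BlockToeplitz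
open scoped ComplexConjugate

variable {ι : Type} [Fintype ι]

/-- The pointwise transposed-conjugated-reflected symbol `Φ̃(z) := Φ(z̄)*`. -/
def Symbol.tilde (Φ : Symbol ι) : Symbol ι where
  toFun := fun x => ContinuousLinearMap.adjoint (Φ.toFun (-x))
  meas := (ContinuousLinearMap.adjoint (𝕜 := ℂ) (E := V ι)
      (F := V ι)).continuous.comp_aestronglyMeasurable
    (Φ.meas.comp_quasiMeasurePreserving
      (Measure.measurePreserving_neg μ𝕋).quasiMeasurePreserving)
  bound := Φ.bound
  le_bound := fun x =>
    le_trans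
      (le_of_eq
        ((ContinuousLinearMap.adjoint (𝕜 := ℂ) (E := V ι) (F := V ι)).norm_map (Φ.toFun (-x))))
      (Φ.le_bound (-x))

/-- A matrix symbol belongs to `H^∞` iff multiplication by it leaves the Hardy space
invariant. -/
def Symbol.MemHinf (Φ : Symbol ι) : Prop :=
  ∀ f : L2 ι, f ∈ hardy ι → Φ.mulLp f ∈ hardy ι

/-- A matrix `H^∞` symbol is inner if `Θ(z)*Θ(z) = I` a.e. -/
def Symbol.IsInner (Φ : Symbol ι) : Prop :=
  Φ.MemHinf ∧ ∀ᵐ x ∂μ𝕋, (ContinuousLinearMap.adjoint (Φ.toFun x)).comp (Φ.toFun x) = 1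

/-- The block Toeplitz operator `T_Φ = P (Φ ·)` on the vector Hardy space. -/
def toeplitz (Φ : Symbol ι) : H2 ι →L[ℂ] H2 ι :=
  (hardyProj ι).comp (Φ.mulLp.comp (hardy ι).subtypeL)

/-- The block Hankel operator `H_Φ = J P^⊥ (Φ ·)`, viewed as an operator from `H²` to `H²`
(its image indeed lies in `H²`). -/
def hankel (Φ : Symbol ι) : H2 ι →L[ℂ] H2 ι :=
  (hardyProj ι).comp <|
    (Jop (V ι)).comp <|
      (ContinuousLinearMap.id ℂ (L2 ι) - (hardy ι).subtypeL.comp (hardyProj ι)).comp <|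
        Φ.mulLp.comp (hardy ι).subtypeL

/-- The image `Θ · H²` of the Hardy space under multiplication by a symbol. -/
def Symbol.rangeH2 (Φ : Symbol ι) : Submodule ℂ (L2 ι) :=
  (hardy ι).map (Φ.mulLp : L2 ι →ₗ[ℂ] L2 ι)

/-- The model space `H(Θ) := H² ⊖ Θ H²`. -/
def modelSpace (Θ : Symbol ι) : Submodule ℂ (L2 ι) :=
  hardy ι ⊓ (Θ.rangeH2)ᗮ

/-- A scalar-valued `L^∞` function on the circle. -/
structure SymbolS : Type where
  toFun : 𝕋 → ℂ
  meas : AEStronglyMeasurable toFun μ𝕋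
  bound : ℝ
  le_bound : ∀ x, ‖toFun x‖ ≤ bound

instance : CoeFun SymbolS (fun _ => 𝕋 → ℂ) := ⟨SymbolS.toFun⟩

/-- Scalar symbols embed into matrix symbols as `φ I_n`. -/
def SymbolS.toMatrix (φ : SymbolS) (ι : Type) [Fintype ι] : Symbol ι where
  toFun := fun x => φ.toFun x • (1 : V ι →L[ℂ] V ι)
  meas := φ.meas.smul aestronglyMeasurable_const
  bound := φ.bound
  le_bound := fun x => by
    have h0 : (0 : ℝ) ≤ φ.bound := le_trans (norm_nonneg _) (φ.le_bound 0)
    calc ‖φ.toFun x • (1 : V ι →L[ℂ] V ι)‖ ≤ ‖φ.toFun x‖ * ‖(1 : V ι →L[ℂ] V ι)‖ :=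
          ContinuousLinearMap.opNorm_smul_le _ _
      _ ≤ φ.bound * 1 := by
          refine mul_le_mul (φ.le_bound x) ?_ (norm_nonneg _) h0
          rw [ContinuousLinearMap.one_def]; exact ContinuousLinearMap.norm_id_le
      _ = φ.bound := mul_one _

/-- The scalar-valued `L²` space of the circle. -/
abbrev L2S : Type := Lp ℂ 2 μ𝕋

/-- The span of the negative trigonometric monomials. -/
def negSpanS : Submodule ℂ L2S :=
  Submodule.span ℂ {f | ∃ k : ℤ, k < 0 ∧ f = fourierLp 2 k}

/-- The scalar Hardy space `H²(𝕋)`. -/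
def hardyS : Submodule ℂ L2S := negSpanSᗮ

/-- The scalar Hardy space as a Hilbert space. -/
abbrev H2S : Type := ↥hardyS

instance : CompleteSpace H2S := by unfold H2S hardyS; infer_instance

instance : HasOrthogonalProjection hardyS := by unfold hardyS; infer_instance

/-- The Szegő (Riesz) projection `P : L² → H²`. -/
def hardyProjS : L2S →L[ℂ] H2S := orthogonalProjection hardyS

/-- Multiplication by a scalar `L^∞` function, as an operator on `L²(𝕋)`. -/
def SymbolS.mulLp (φ : SymbolS) : L2S →L[ℂ] L2S :=
  pointwiseCLM (fun x => φ.toFun x • (1 : ℂ →L[ℂ] ℂ))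
    (φ.meas.smul aestronglyMeasurable_const)
    (C := φ.bound)
    (fun x => by
      calc ‖φ.toFun x • (1 : ℂ →L[ℂ] ℂ)‖ ≤ ‖φ.toFun x‖ * ‖(1 : ℂ →L[ℂ] ℂ)‖ :=
            ContinuousLinearMap.opNorm_smul_le _ _
        _ = ‖φ.toFun x‖ := by rw [norm_one, mul_one]
        _ ≤ φ.bound := φ.le_bound x)

/-- The scalar Toeplitz operator `T_φ` on `H²`. -/
def toeplitzS (φ : SymbolS) : H2S →L[ℂ] H2S :=
  hardyProjS.comp (φ.mulLp.comp hardyS.subtypeL)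

/-- The scalar Hankel operator `H_φ = J P^⊥ (φ ·)` on `H²`. -/
def hankelS (φ : SymbolS) : H2S →L[ℂ] H2S :=
  hardyProjS.comp <|
    (Jop ℂ).comp <|
      (ContinuousLinearMap.id ℂ L2S - hardyS.subtypeL.comp hardyProjS).comp <|
        φ.mulLp.comp hardyS.subtypeL

/-- Pointwise product of scalar symbols. -/
def SymbolS.mul (φ ψ : SymbolS) : SymbolS where
  toFun := fun x => φ.toFun x * ψ.toFun x
  meas := φ.meas.mul ψ.meas
  bound := max φ.bound 0 * max ψ.bound 0
  le_bound := fun x => by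
    rw [norm_mul]
    exact mul_le_mul ((φ.le_bound x).trans (le_max_left _ _))
      ((ψ.le_bound x).trans (le_max_left _ _)) (norm_nonneg _) (le_max_right _ _)

/-- The complex-conjugate symbol `φ̄`. -/
def SymbolS.conj (φ : SymbolS) : SymbolS where
  toFun := fun x => conj (φ.toFun x)
  meas := Complex.continuous_conj.comp_aestronglyMeasurable φ.meas
  bound := φ.bound
  le_bound := fun x => le_trans (le_of_eq (RCLike.norm_conj _)) (φ.le_bound x)

/-- The reflected conjugate symbol `φ̃(z) := conj (φ(z̄))`. -/
def SymbolS.tilde (φ : SymbolS) : SymbolS where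
  toFun := fun x => conj (φ.toFun (-x))
  meas := Complex.continuous_conj.comp_aestronglyMeasurable
    (φ.meas.comp_quasiMeasurePreserving
      (Measure.measurePreserving_neg μ𝕋).quasiMeasurePreserving)
  bound := φ.bound
  le_bound := fun x => le_trans (le_of_eq (RCLike.norm_conj _)) (φ.le_bound (-x))

/-- A scalar symbol is in `H^∞` iff multiplication by it preserves `H²`. -/
def SymbolS.MemHinf (φ : SymbolS) : Prop :=
  ∀ f : L2S, f ∈ hardyS → φ.mulLp f ∈ hardyS

/-- A scalar inner function: an `H^∞` function which is unimodular a.e. on the circle. -/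
def SymbolS.IsInner (φ : SymbolS) : Prop :=
  φ.MemHinf ∧ ∀ᵐ x ∂μ𝕋, ‖φ.toFun x‖ = 1

/-- The image `θ · H²` of the Hardy space under a scalar multiplication operator. -/
def SymbolS.rangeH2 (φ : SymbolS) : Submodule ℂ L2S :=
  hardyS.map (φ.mulLp : L2S →ₗ[ℂ] L2S)

/-- The scalar model space `H(θ) = H² ⊖ θH²`. -/
def modelSpaceS (θ : SymbolS) : Submodule ℂ L2S :=
  hardyS ⊓ (θ.rangeH2)ᗮ

/-- The coordinate function `z` on the circle (i.e. `x ↦ e^{ix}`). -/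
def circleCoord : 𝕋 → ℂ := fun x => fourier 1 x

/-- The symbol `z` of the unilateral shift. -/
def shiftSymbolS : SymbolS where
  toFun := circleCoord
  meas := (map_continuous (fourier 1)).aestronglyMeasurable
  bound := 1
  le_bound := fun x => le_of_eq (norm_fourier_apply 1 x)

/-- The symbol `z̄`. -/
def coshiftSymbolS : SymbolS where
  toFun := fun x => fourier (-1) x
  meas := (map_continuous (fourier (-1))).aestronglyMeasurable
  bound := 1
  le_bound := fun x => le_of_eq (norm_fourier_apply (-1) x)

/-- An operator on a complex Hilbert space is hyponormal if its self-commutator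
`[T*, T] = T*T - TT*` is a positive operator. -/
def Hyponormal {H : Type*} [NormedAddCommGroup H] [InnerProductSpace ℂ H] [CompleteSpace H]
    (T : H →L[ℂ] H) : Prop :=
  (ContinuousLinearMap.adjoint T ∘L T - T ∘L ContinuousLinearMap.adjoint T).IsPositive

/-- A Blaschke factor `b_a(z) = (z - a)/(1 - āz)`. -/
def blaschke (a z : ℂ) : ℂ := (z - a) / (1 - conj a * z)

end BlockToeplitz

namespace BlockToeplitz
open scoped ComplexConjugate

/-- A bounded measurable function lies in `L²` of the circle. -/
theorem SymbolS.memLp2 (φ : SymbolS) : MemLp φ.toFun 2 μ𝕋 :=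
  (memLp_top_of_bound φ.meas φ.bound
    (Filter.Eventually.of_forall φ.le_bound)).mono_exponent le_top

/-- The Szegő reproducing kernel `k_ω(z) = (1 - ω̄ z)⁻¹`. -/
def szegoKernel (ω : ℂ) : 𝕋 → ℂ := fun x => (1 - conj ω * circleCoord x)⁻¹

theorem szegoKernel_memLp2 (ω : ℂ) (hω : ‖ω‖ < 1) : MemLp (szegoKernel ω) 2 μ𝕋 := by
  have hne : ∀ x : 𝕋, (1 - conj ω * circleCoord x) ≠ 0 := by
    intro x h
    have h1 : ‖conj ω * circleCoord x‖ < 1 := by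
      rw [norm_mul, RCLike.norm_conj]
      simpa [circleCoord, norm_fourier_apply, Circle.norm_coe] using hω
    have h2 : (1 : ℂ) = conj ω * circleCoord x := by
      rwa [sub_eq_zero] at h
    rw [← h2] at h1
    simp at h1
  have hcont : Continuous (szegoKernel ω) := by
    refine Continuous.inv₀ ?_ hne
    exact continuous_const.sub (continuous_const.mul (map_continuous (fourier 1)))
  refine MemLp.mono_exponent (q := ⊤) ?_ le_top
  refine memLp_top_of_bound hcont.aestronglyMeasurable ((1 - ‖ω‖)⁻¹) ?_
  refine Filter.Eventually.of_forall fun x => ?_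
  have hb : 1 - ‖ω‖ ≤ ‖1 - conj ω * circleCoord x‖ := by
    calc 1 - ‖ω‖ = ‖(1 : ℂ)‖ - ‖conj ω * circleCoord x‖ := by
          rw [norm_one, norm_mul, RCLike.norm_conj]
          simp [circleCoord, norm_fourier_apply, Circle.norm_coe]
      _ ≤ ‖1 - conj ω * circleCoord x‖ := norm_sub_norm_le _ _
  rw [szegoKernel, norm_inv]
  exact inv_anti₀ (by linarith) hb

end BlockToeplitz

/-
Everything is read off Fourier coefficients. The coefficients of `H_φ (z f)` are those of `H_φ f`
shifted down by one. If `H_φ f = ⟪w, f⟫ u` has rank one, this forces `u` and `w` to be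
eigenvectors of the backward shift, with eigenvalues `ω` and `ω̄`: their coefficient sequences are
geometric, so they are multiples of the Szegő kernels `k_ω̄` and `k_ω`, and `|ω| < 1` because the
coefficients are square summable.

For the second part, `‖H_φ̄ e_k‖ = ‖H_z̄ e_k‖` on the monomials `e_k`. As `H_z̄ e_1 = 0` and the
coefficients of `H_φ̄ e_1` are the conjugates of `φ̂(k)`, `k ≥ 2`, these vanish; and
`H_φ̄ e_0 = conj (φ̂(1)) e_0`, `H_z̄ e_0 = e_0` give `|φ̂(1)| = 1`.
-/

open scoped ComplexConjugate

theorem ContinuousLinearMap.exists_eq_inner_smul_of_finrank_range_eq_one {𝕜 E F : Type*}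
    [RCLike 𝕜] [NormedAddCommGroup E] [InnerProductSpace 𝕜 E] [CompleteSpace E]
    [NormedAddCommGroup F] [InnerProductSpace 𝕜 F] [CompleteSpace F] (T : E →L[𝕜] F)
    (hT : Module.finrank 𝕜 (LinearMap.range (T : E →ₗ[𝕜] F)) = 1) :
    ∃ (u : F) (w : E), u ≠ 0 ∧ w ≠ 0 ∧ ∀ f, T f = inner 𝕜 w f • u := by
  obtain ⟨v, hv0, hspan⟩ := finrank_eq_one_iff'.mp hT
  have hv : (v : F) ≠ 0 := fun h => hv0 (Subtype.ext h)
  have hnorm : (‖(v : F)‖ ^ 2 : 𝕜) ≠ 0 := by exact_mod_cast (pow_pos (norm_pos_iff.mpr hv) 2).ne'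
  set w : E := ((‖(v : F)‖ ^ 2 : 𝕜))⁻¹ • adjoint T v
  have hTw : ∀ f, T f = inner 𝕜 w f • (v : F) := fun f => by
    obtain ⟨c, hc⟩ := hspan ⟨T f, f, rfl⟩
    replace hc : T f = c • (v : F) := (congrArg Subtype.val hc).symm
    rw [inner_smul_left, adjoint_inner_left, hc, inner_smul_right, inner_self_eq_norm_sq_to_K]
    simp only [map_inv₀, map_pow, RCLike.conj_ofReal]
    rw [mul_left_comm, inv_mul_cancel₀ hnorm, mul_one]
  refine ⟨v, w, hv, fun hw => hv ?_, hTw⟩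
  obtain ⟨f, hf⟩ := v.2
  rw [← hf, coe_coe, hTw, hw, inner_zero_left, zero_smul]

theorem Complex.exists_mem_Ico_exp_mul_I_eq {α : ℂ} (hα : ‖α‖ = 1) :
    ∃ θ ∈ Set.Ico 0 (2 * π), exp (θ * I) = α := by
  refine ⟨toIcoMod two_pi_pos 0 α.arg, by simpa using toIcoMod_mem_Ico two_pi_pos 0 α.arg, ?_⟩
  rw [toIcoMod, ofReal_sub, ofReal_zsmul, ofReal_mul, ofReal_ofNat,
    exp_mul_I_periodic.sub_zsmul_eq]
  simpa [hα] using norm_mul_exp_arg_mul_I α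

namespace BlockToeplitz

def coeff (n : ℤ) : L2S →L[ℂ] ℂ := innerSL ℂ (fourierLp 2 n)

theorem coeff_apply (n : ℤ) (f : L2S) : coeff n f = ⟪fourierLp 2 n, f⟫_ℂ := rfl

theorem coeff_eq_fourierCoeff (n : ℤ) (f : L2S) : coeff n f = fourierCoeff f n := by
  rw [coeff_apply, ← fourierBasis_repr, fourierBasis.repr_apply_apply, coe_fourierBasis]

theorem coeff_toLp {g : 𝕋 → ℂ} (hg : MemLp g 2 μ𝕋) (n : ℤ) :
    coeff n (hg.toLp g) = fourierCoeff g n := by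
  rw [coeff_eq_fourierCoeff, fourierCoeff_congr_ae hg.coeFn_toLp]

theorem ext_coeff {f g : L2S} (h : ∀ n, coeff n f = coeff n g) : f = g :=
  fourierBasis.repr.injective <| lp.ext <| funext fun n => by
    simpa only [fourierBasis_repr, coeff_eq_fourierCoeff] using h n

theorem coeff_fourierLp (k n : ℤ) : coeff n (fourierLp 2 k) = if n = k then 1 else 0 :=
  orthonormal_iff_ite.mp orthonormal_fourier n k

theorem mem_hardyS_iff {f : L2S} : f ∈ hardyS ↔ ∀ n < 0, coeff n f = 0 := by
  rw [hardyS, negSpanS, Submodule.mem_orthogonal']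
  change span ℂ _ ≤ LinearMap.ker (innerSL ℂ f : L2S →ₗ[ℂ] ℂ) ↔ _
  rw [Submodule.span_le]
  refine ⟨fun h n hn => ?_, fun h _ ⟨n, hn, hg⟩ => ?_⟩
  · rw [coeff_apply, inner_eq_zero_symm]
    exact h ⟨n, hn, rfl⟩
  · rw [hg, SetLike.mem_coe, LinearMap.mem_ker, ContinuousLinearMap.coe_coe, innerSL_apply_apply,
      inner_eq_zero_symm]
    exact h n hn

theorem fourierLp_mem_hardyS (n : ℕ) : fourierLp 2 (n : ℤ) ∈ hardyS :=
  mem_hardyS_iff.mpr fun k hk => by rw [coeff_fourierLp, if_neg (by omega)]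

def fourierH2 (n : ℕ) : H2S := ⟨fourierLp 2 n, fourierLp_mem_hardyS n⟩

theorem coeff_fourierH2 (k : ℕ) (n : ℤ) : coeff n (fourierH2 k) = if n = k then 1 else 0 :=
  coeff_fourierLp _ _

theorem norm_fourierH2 (k : ℕ) : ‖fourierH2 k‖ = 1 := orthonormal_fourier.1 _

theorem inner_fourierH2 (w : H2S) (n : ℕ) : ⟪w, fourierH2 n⟫_ℂ = conj (coeff n w) := by
  rw [coeff_apply, inner_conj_symm]
  rfl

theorem coeff_hardyProjS (f : L2S) (n : ℤ) :
    coeff n (hardyProjS f) = if 0 ≤ n then coeff n f else 0 := by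
  split_ifs with hn
  · lift n to ℕ using hn
    exact inner_orthogonalProjectionOnto_eq_of_mem_left (fourierH2 n) f
  · exact mem_hardyS_iff.mp (hardyProjS f).2 n (by omega)

theorem coeff_Jop (f : L2S) (n : ℤ) : coeff n (Jop ℂ f) = coeff (-(n + 1)) f := by
  have hJ : (Jop ℂ f : 𝕋 → ℂ) =ᵐ[μ𝕋] fun x => fourier (-1) x * f (-x) := by
    rw [Jop, ContinuousLinearMap.comp_apply, pointwiseCLM_apply]
    refine (MemLp.coeFn_toLp _).trans ?_
    filter_upwards [Lp.coeFn_compMeasurePreserving (p := 2) f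
      (Measure.measurePreserving_neg μ𝕋)] with x hx
    rw [smul_apply, one_apply_eq_self, smul_eq_mul]
    exact congrArg _ hx
  rw [coeff_eq_fourierCoeff, coeff_eq_fourierCoeff, fourierCoeff_congr_ae hJ, fourierCoeff,
    fourierCoeff, ← (Measure.measurePreserving_neg μ𝕋).integral_comp
      (Homeomorph.neg 𝕋).measurableEmbedding]
  refine integral_congr_ae (Filter.Eventually.of_forall fun x => ?_)
  simp only [smul_eq_mul, neg_neg]
  rw [← mul_assoc, ← fourier_add, fourier_apply, fourier_apply,
    smul_neg, ← neg_smul, neg_add, neg_neg, neg_neg]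

theorem coeFn_mulLp (φ : SymbolS) (f : L2S) :
    (φ.mulLp f : 𝕋 → ℂ) =ᵐ[μ𝕋] fun x => φ x * f x := by
  rw [SymbolS.mulLp, pointwiseCLM_apply]
  exact MemLp.coeFn_toLp _

theorem coeff_mulLp (φ : SymbolS) (f : L2S) (n : ℤ) :
    coeff n (φ.mulLp f) = fourierCoeff (fun x => φ x * f x) n := by
  rw [coeff_eq_fourierCoeff, fourierCoeff_congr_ae (coeFn_mulLp φ f)]

theorem coeff_hankelS (φ : SymbolS) (f : H2S) (n : ℤ) :
    coeff n (hankelS φ f)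
      = if 0 ≤ n then fourierCoeff (fun x => φ x * (f : L2S) x) (-(n + 1)) else 0 := by
  have hH : hankelS φ f = hardyProjS (Jop ℂ (φ.mulLp f - hardyProjS (φ.mulLp f))) := rfl
  rw [hH, coeff_hardyProjS]
  split_ifs with hn
  · rw [coeff_Jop, map_sub, coeff_hardyProjS, if_neg (by omega), sub_zero, coeff_mulLp]
  · rfl

theorem fourierCoeff_mul_fourier (g : 𝕋 → ℂ) (k n : ℤ) :
    fourierCoeff (fun x => g x * fourier k x) n = fourierCoeff g (n - k) := by
  refine integral_congr_ae (Filter.Eventually.of_forall fun x => ?_)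
  simp only [smul_eq_mul]
  rw [neg_sub, sub_eq_neg_add, fourier_add]
  ring

theorem fourierCoeff_conj (g : 𝕋 → ℂ) (n : ℤ) :
    fourierCoeff (fun x => conj (g x)) n = conj (fourierCoeff g (-n)) := by
  rw [fourierCoeff, fourierCoeff, ← integral_conj]
  refine integral_congr_ae (Filter.Eventually.of_forall fun x => ?_)
  simp only [smul_eq_mul, map_mul, neg_neg, ← fourier_neg]

theorem coeff_hankelS_fourierH2 (φ : SymbolS) (k : ℕ) (n : ℤ) :
    coeff n (hankelS φ (fourierH2 k)) = if 0 ≤ n then fourierCoeff φ (-(n + 1) - k) else 0 := by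
  have hk : (fun x => φ x * (fourierH2 k : L2S) x) =ᵐ[μ𝕋] fun x => φ x * fourier k x :=
    (coeFn_fourierLp 2 _).mono fun x hx => congrArg (φ x * ·) hx
  rw [coeff_hankelS, fourierCoeff_congr_ae hk, fourierCoeff_mul_fourier]

theorem fourier_natCast_apply (m : ℕ) (x : 𝕋) : fourier (m : ℤ) x = fourier 1 x ^ m := by
  rw [fourier_apply, fourier_one, natCast_zsmul, AddCircle.toCircle_nsmul, Circle.coe_pow]

theorem fourierCoeff_tsum_mul_fourier {c : ℕ → ℂ} (hc : Summable fun m => ‖c m‖) (n : ℤ) :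
    fourierCoeff (fun x : 𝕋 => ∑' m : ℕ, c m * fourier m x) n
      = if 0 ≤ n then c n.toNat else 0 := by
  set F : ℕ → 𝕋 → ℂ := fun m x => c m * (fourier (-n) x * fourier m x)
  have hF_norm (m : ℕ) (x : 𝕋) : ‖F m x‖ = ‖c m‖ := by
    simp only [F, norm_mul, norm_fourier_apply, mul_one]
  have hF_int (m : ℕ) : Integrable (F m) μ𝕋 :=
    Integrable.of_bound (by fun_prop) ‖c m‖ (Filter.Eventually.of_forall fun x => (hF_norm m x).le)
  have hF_sum : Summable fun m => ∫ x, ‖F m x‖ ∂μ𝕋 := by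
    simpa only [hF_norm, integral_const, probReal_univ, one_smul] using hc
  have hF_coeff (m : ℕ) : ∫ x, F m x ∂μ𝕋 = c m * Pi.single (M := fun _ => ℂ) (m : ℤ) 1 n := by
    rw [integral_const_mul, ← fourierCoeff_fourier (T := 2 * π)]
    rfl
  calc fourierCoeff (fun x : 𝕋 => ∑' m : ℕ, c m * fourier m x) n
      = ∫ x, ∑' m, F m x ∂μ𝕋 := by
        refine integral_congr_ae (Filter.Eventually.of_forall fun x => ?_)
        simp only [F, smul_eq_mul, ← tsum_mul_left]
        exact tsum_congr fun m => by ring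
    _ = ∑' m, c m * Pi.single (M := fun _ => ℂ) (m : ℤ) 1 n := by
        rw [← integral_tsum_of_summable_integral_norm hF_int hF_sum]
        exact tsum_congr hF_coeff
    _ = if 0 ≤ n then c n.toNat else 0 := by
        split_ifs with hn
        · rw [tsum_eq_single n.toNat fun m hm => by simp [Pi.single_apply]; omega]
          simp [hn]
        · simp [show ∀ m : ℕ, n ≠ m from fun m => by omega]

theorem szegoKernel_eq_tsum {ω : ℂ} (hω : ‖ω‖ < 1) (x : 𝕋) :
    szegoKernel ω x = ∑' m : ℕ, conj ω ^ m * fourier m x := by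
  have hlt : ‖conj ω * circleCoord x‖ < 1 := by
    rwa [norm_mul, RCLike.norm_conj, circleCoord, norm_fourier_apply, mul_one]
  rw [szegoKernel, ← tsum_geometric_of_norm_lt_one hlt]
  simp only [mul_pow, circleCoord, fourier_natCast_apply]

theorem coeff_szegoKernel {ω : ℂ} (hω : ‖ω‖ < 1) (n : ℤ) :
    coeff n ((szegoKernel_memLp2 ω hω).toLp (szegoKernel ω))
      = if 0 ≤ n then conj ω ^ n.toNat else 0 := by
  rw [coeff_toLp, funext (szegoKernel_eq_tsum hω), fourierCoeff_tsum_mul_fourier]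
  simpa using summable_geometric_of_lt_one (norm_nonneg ω) hω

theorem coeff_natCast_eq_pow_mul {x : L2S} {c : ℂ}
    (h : ∀ n : ℤ, 0 ≤ n → coeff (n + 1) x = c * coeff n x) (n : ℕ) :
    coeff n x = c ^ n * coeff 0 x := by
  induction n with
  | zero => rw [pow_zero, one_mul, Nat.cast_zero]
  | succ n ih => rw [Nat.cast_succ, h n n.cast_nonneg, ih, pow_succ]; ring

theorem norm_lt_one_of_coeff_eq_pow_mul {x : L2S} {c : ℂ}
    (h : ∀ n : ℕ, coeff n x = c ^ n * coeff 0 x) (h0 : coeff 0 x ≠ 0) : ‖c‖ < 1 := by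
  have hsum : Summable fun n : ℕ => ‖coeff n x‖ ^ 2 := by
    simp only [coeff_eq_fourierCoeff]
    exact (hasSum_sq_fourierCoeff x).summable.comp_injective Nat.cast_injective
  have hsq (n : ℕ) : ‖coeff n x‖ ^ 2 = (‖c‖ ^ 2) ^ n * ‖coeff 0 x‖ ^ 2 := by
    rw [h, norm_mul, norm_pow]
    ring
  simp only [hsq] at hsum
  have := (summable_mul_right_iff (pow_ne_zero 2 (norm_ne_zero_iff.mpr h0))).mp hsum
  rw [summable_geometric_iff_norm_lt_one, norm_pow, norm_norm] at this
  exact (pow_lt_one_iff_of_nonneg (norm_nonneg c) two_ne_zero).mp this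

theorem exists_eq_smul_szegoKernel {x : L2S} (hx : x ∈ hardyS) (hx0 : x ≠ 0) {ω : ℂ}
    (h : ∀ n : ℤ, 0 ≤ n → coeff (n + 1) x = conj ω * coeff n x) :
    ∃ hω : ‖ω‖ < 1, x = coeff 0 x • (szegoKernel_memLp2 ω hω).toLp (szegoKernel ω) := by
  have hpow := coeff_natCast_eq_pow_mul h
  have hcoeff (n : ℤ) : coeff n x = if 0 ≤ n then conj ω ^ n.toNat * coeff 0 x else 0 := by
    split_ifs with hn
    · lift n to ℕ using hn
      rw [hpow, Int.toNat_natCast]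
    · exact mem_hardyS_iff.mp hx n (by omega)
  have h0 : coeff 0 x ≠ 0 := fun h0 => hx0 <| ext_coeff fun n => by
    rw [hcoeff, h0, map_zero, mul_zero, ite_self]
  have hω : ‖ω‖ < 1 := by simpa using norm_lt_one_of_coeff_eq_pow_mul hpow h0
  refine ⟨hω, ext_coeff fun n => ?_⟩
  rw [hcoeff, map_smul, coeff_szegoKernel hω, smul_eq_mul]
  split_ifs <;> ring

theorem coeff_shiftSymbolS_mulLp (f : L2S) (n : ℤ) :
    coeff n (shiftSymbolS.mulLp f) = coeff (n - 1) f := by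
  rw [coeff_mulLp, coeff_eq_fourierCoeff, ← fourierCoeff_mul_fourier]
  simp only [shiftSymbolS, circleCoord, mul_comm]

def shiftH2 (f : H2S) : H2S :=
  ⟨shiftSymbolS.mulLp f, mem_hardyS_iff.mpr fun n hn => by
    rw [coeff_shiftSymbolS_mulLp]
    exact mem_hardyS_iff.mp f.2 _ (by omega)⟩

theorem shiftH2_fourierH2 (k : ℕ) : shiftH2 (fourierH2 k) = fourierH2 (k + 1) := by
  refine Subtype.ext <| ext_coeff fun n => ?_
  rw [shiftH2, coeff_shiftSymbolS_mulLp, coeff_fourierH2, coeff_fourierH2]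
  push_cast
  exact if_congr (by omega) rfl rfl

theorem coeff_hankelS_shiftH2 (φ : SymbolS) (f : H2S) {n : ℤ} (hn : 0 ≤ n) :
    coeff n (hankelS φ (shiftH2 f)) = coeff (n + 1) (hankelS φ f) := by
  have hf : (fun x => φ x * (shiftH2 f : L2S) x) =ᵐ[μ𝕋]
      fun x => (φ x * (f : L2S) x) * fourier 1 x := by
    filter_upwards [coeFn_mulLp shiftSymbolS f] with x hx
    rw [shiftH2, hx, mul_comm (shiftSymbolS x), mul_assoc]
    rfl
  rw [coeff_hankelS, coeff_hankelS, if_pos hn, if_pos (by omega), fourierCoeff_congr_ae hf,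
    fourierCoeff_mul_fourier]
  ring_nf

theorem exists_eq_smul_szegoKernel_of_hankelS_eq_inner_smul {φ : SymbolS} {u w : H2S}
    (hu : u ≠ 0) (hw : w ≠ 0) (hH : ∀ f, hankelS φ f = ⟪w, f⟫_ℂ • u) :
    ∃ (ω : ℂ) (hω : ‖ω‖ < 1),
      (u : L2S) = coeff 0 u • (szegoKernel_memLp2 (conj ω) (by simpa using hω)).toLp
        (szegoKernel (conj ω)) ∧
      (w : L2S) = coeff 0 w • (szegoKernel_memLp2 ω hω).toLp (szegoKernel ω) := by
  have hshift (f : H2S) {n : ℤ} (hn : 0 ≤ n) :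
      ⟪w, shiftH2 f⟫_ℂ * coeff n u = ⟪w, f⟫_ℂ * coeff (n + 1) u := by
    have := coeff_hankelS_shiftH2 φ f hn
    rwa [hH, hH, Submodule.coe_smul, Submodule.coe_smul, map_smul, map_smul] at this
  have hww : ⟪w, w⟫_ℂ ≠ 0 := inner_self_ne_zero.mpr hw
  -- `hshift` at `f = w` says that the backward shift maps `u` to `ω • u`.
  set ω := ⟪w, shiftH2 w⟫_ℂ / ⟪w, w⟫_ℂ
  have hu_rec (n : ℤ) (hn : 0 ≤ n) : coeff (n + 1) u = conj (conj ω) * coeff n u := by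
    rw [conj_conj, div_mul_eq_mul_div, hshift w hn, mul_div_cancel_left₀ _ hww]
  obtain ⟨_, hu_eq⟩ := exists_eq_smul_szegoKernel u.2 (by simpa using hu) hu_rec
  have hu0 : coeff 0 u ≠ 0 := fun h0 => hu <| Subtype.ext <| by rw [hu_eq, h0, zero_smul]; rfl
  have hw_shift (f : H2S) : ⟪w, shiftH2 f⟫_ℂ = ω * ⟪w, f⟫_ℂ := by
    have := hshift f (le_refl 0)
    have h1 := hu_rec 0 le_rfl
    rw [zero_add, conj_conj] at h1
    rw [zero_add, h1] at this
    exact mul_right_cancel₀ hu0 (by rw [this]; ring)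
  have hw_rec (n : ℤ) (hn : 0 ≤ n) : coeff (n + 1) w = conj ω * coeff n w := by
    lift n to ℕ using hn
    have := hw_shift (fourierH2 n)
    rw [shiftH2_fourierH2, inner_fourierH2, inner_fourierH2] at this
    simpa using congrArg conj this
  obtain ⟨hω, hw_eq⟩ := exists_eq_smul_szegoKernel w.2 (by simpa using hw) hw_rec
  exact ⟨ω, hω, hu_eq, hw_eq⟩

theorem exists_hankelS_eq_smul_inner_szegoKernel_smul (φ : SymbolS)
    (hrank : Module.finrank ℂ ↥(LinearMap.range (hankelS φ : H2S →ₗ[ℂ] H2S)) = 1) :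
    ∃ (ω : ℂ) (hω : ‖ω‖ < 1), ∃ c : ℂ, ∀ f : H2S,
      ((hankelS φ f : L2S))
        = c • (((inner ℂ ((szegoKernel_memLp2 ω hω).toLp (szegoKernel ω)) ((f : L2S)) : ℂ)) •
            (szegoKernel_memLp2 (conj ω) (by simpa using hω)).toLp
              (szegoKernel (conj ω))) := by
  obtain ⟨u, w, hu, hw, hH⟩ :=
    (hankelS φ).exists_eq_inner_smul_of_finrank_range_eq_one hrank
  obtain ⟨ω, hω, hu_eq, hw_eq⟩ := exists_eq_smul_szegoKernel_of_hankelS_eq_inner_smul hu hw hH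
  set a := coeff 0 (u : L2S)
  set b := coeff 0 (w : L2S)
  refine ⟨ω, hω, conj b * a, fun f => ?_⟩
  rw [hH, Submodule.coe_smul, Submodule.coe_inner, hu_eq, hw_eq, inner_smul_left, smul_smul,
    smul_smul]
  ring_nf

theorem coeff_hankelS_conj_fourierH2 (φ : SymbolS) (k : ℕ) (n : ℤ) :
    coeff n (hankelS φ.conj (fourierH2 k))
      = if 0 ≤ n then conj (fourierCoeff φ (n + 1 + k)) else 0 := by
  rw [coeff_hankelS_fourierH2]
  split_ifs
  · rw [show -(n + 1) - (k : ℤ) = -(n + 1 + k) by ring]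
    exact (fourierCoeff_conj φ _).trans (by rw [neg_neg])
  · rfl

theorem hankelS_coshiftSymbolS_fourierH2 (k : ℕ) :
    hankelS coshiftSymbolS (fourierH2 k) = if k = 0 then fourierH2 0 else 0 := by
  refine Subtype.ext <| ext_coeff fun n => ?_
  rw [coeff_hankelS_fourierH2, coshiftSymbolS, fourierCoeff_fourier, Pi.single_apply]
  split_ifs <;> simp_all [coeff_fourierH2] <;> omega

theorem ae_eq_mul_circleCoord_add_of_fourierCoeff_eq_zero {g : 𝕋 → ℂ} (hg : MemLp g 2 μ𝕋)
    (hg_mem : hg.toLp g ∈ hardyS) (hg_two : ∀ n : ℤ, 2 ≤ n → fourierCoeff g n = 0) :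
    ∀ᵐ x ∂μ𝕋, g x = fourierCoeff g 1 * circleCoord x + fourierCoeff g 0 := by
  set α := fourierCoeff g 1
  set β := fourierCoeff g 0
  have hg_eq : hg.toLp g = α • fourierLp 2 1 + β • fourierLp 2 0 := by
    refine ext_coeff fun n => ?_
    rw [map_add, map_smul, map_smul, coeff_fourierLp, coeff_fourierLp]
    obtain hn | rfl | rfl | hn : n < 0 ∨ n = 0 ∨ n = 1 ∨ 2 ≤ n := by omega
    · rw [mem_hardyS_iff.mp hg_mem n hn, if_neg (by omega), if_neg (by omega), smul_zero,
        smul_zero, add_zero]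
    · simp [coeff_toLp, β]
    · simp [coeff_toLp, α]
    · rw [coeff_toLp, hg_two n hn, if_neg (by omega), if_neg (by omega), smul_zero, smul_zero,
        add_zero]
  filter_upwards [hg.coeFn_toLp, Lp.coeFn_add (α • fourierLp 2 1) (β • fourierLp 2 0),
    Lp.coeFn_smul α (fourierLp 2 1 : L2S), Lp.coeFn_smul β (fourierLp 2 0 : L2S),
    coeFn_fourierLp (T := 2 * π) 2 1, coeFn_fourierLp (T := 2 * π) 2 0]
    with x hgx hadd hs1 hs0 hf1 hf0
  rw [← hgx, hg_eq, hadd, Pi.add_apply, hs1, hs0, Pi.smul_apply, Pi.smul_apply, hf1, hf0,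
    smul_eq_mul, smul_eq_mul, fourier_zero, mul_one]
  rfl

theorem exists_ae_eq_exp_mul_circleCoord_add (φ : SymbolS) (hφ : φ.memLp2.toLp φ.toFun ∈ hardyS)
    (h : ContinuousLinearMap.adjoint (hankelS φ.conj) ∘L hankelS φ.conj
      = ContinuousLinearMap.adjoint (hankelS coshiftSymbolS) ∘L hankelS coshiftSymbolS) :
    ∃ θ ∈ Set.Ico (0 : ℝ) (2 * π), ∃ β : ℂ,
      ∀ᵐ x ∂μ𝕋, φ.toFun x = Complex.exp (θ * Complex.I) * circleCoord x + β := by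
  have hnorm (k : ℕ) :
      ‖hankelS φ.conj (fourierH2 k)‖ = ‖hankelS coshiftSymbolS (fourierH2 k)‖ := by
    rw [ContinuousLinearMap.apply_norm_eq_sqrt_inner_adjoint_left, h,
      ← ContinuousLinearMap.apply_norm_eq_sqrt_inner_adjoint_left]
  have hφ_two (n : ℤ) (hn : 2 ≤ n) : fourierCoeff φ.toFun n = 0 := by
    have hH1 : hankelS φ.conj (fourierH2 1) = 0 := by
      rw [← norm_eq_zero, hnorm, hankelS_coshiftSymbolS_fourierH2, if_neg one_ne_zero, norm_zero]
    have := coeff_hankelS_conj_fourierH2 φ 1 (n - 2)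
    rw [hH1, Submodule.coe_zero, map_zero, if_pos (by omega), eq_comm, map_eq_zero] at this
    rwa [show n - 2 + 1 + ((1 : ℕ) : ℤ) = n by push_cast; ring] at this
  have hφ_one : ‖fourierCoeff φ.toFun 1‖ = 1 := by
    have hH0 : hankelS φ.conj (fourierH2 0) = conj (fourierCoeff φ.toFun 1) • fourierH2 0 := by
      refine Subtype.ext <| ext_coeff fun n => ?_
      rw [coeff_hankelS_conj_fourierH2, Submodule.coe_smul, map_smul, coeff_fourierH2]
      rcases lt_trichotomy n 0 with hn | rfl | hn
      · rw [if_neg (by omega), if_neg (by omega), smul_zero]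
      · simp
      · rw [if_pos hn.le, if_neg (by omega), hφ_two _ (by omega), map_zero, smul_zero]
    have := hnorm 0
    rwa [hH0, hankelS_coshiftSymbolS_fourierH2, if_pos rfl, norm_smul, norm_fourierH2, mul_one,
      RCLike.norm_conj] at this
  obtain ⟨θ, hθ, hexp⟩ := Complex.exists_mem_Ico_exp_mul_I_eq hφ_one
  refine ⟨θ, hθ, fourierCoeff φ.toFun 0, ?_⟩
  rw [hexp]
  exact ae_eq_mul_circleCoord_add_of_fourierCoeff_eq_zero φ.memLp2 hφ hφ_two

/-- **Statement 16.** A rank-one Hankel operator on `H²` is a scalar multiple of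
`k_ω̄ ⊗ k_ω` for some `ω ∈ 𝔻`; consequently, if `H_φ̄* H_φ̄ = H_z̄* H_z̄` for `φ ∈ H²`,
then `φ = e^{iθ} z + β`. -/
theorem statement16 :
    (∀ φ : SymbolS, Module.finrank ℂ ↥(LinearMap.range (hankelS φ : H2S →ₗ[ℂ] H2S)) = 1 →
      ∃ (ω : ℂ) (hω : ‖ω‖ < 1), ∃ c : ℂ, ∀ f : H2S,
        ((hankelS φ f : L2S))
          = c • (((inner ℂ ((szegoKernel_memLp2 ω hω).toLp (szegoKernel ω)) ((f : L2S)) : ℂ)) •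
              (szegoKernel_memLp2 (conj ω) (by simpa using hω)).toLp
                (szegoKernel (conj ω)))) ∧
    (∀ φ : SymbolS, (φ.memLp2.toLp φ.toFun) ∈ hardyS →
      ContinuousLinearMap.adjoint (hankelS φ.conj) ∘L hankelS φ.conj
          = ContinuousLinearMap.adjoint (hankelS coshiftSymbolS) ∘L hankelS coshiftSymbolS →
      ∃ θ ∈ Set.Ico (0 : ℝ) (2 * π), ∃ β : ℂ,
        ∀ᵐ x ∂μ𝕋, φ.toFun x = Complex.exp (θ * Complex.I) * circleCoord x + β) :=
  ⟨exists_hankelS_eq_smul_inner_szegoKernel_smul, exists_ae_eq_exp_mul_circleCoord_add⟩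
end BlockToeplitz
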